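/- The inverse Gamma density f satisfies the stationary Fokker–Planck equation λ d/dw[(w - m)f(w)] + (σ²/2) d²/dw²[w² f(w)] = 0 on (0,∞), when μ = 1 + 2λ/σ² and κ = (μ-1)m, i.e., f(w) = (κ^μ/Γ(μ)) e^{-κ/w} w^{-(1+μ)}. -/

import Mathlib

open Real Filter Topology

/-!
Zero flux: the inverse Gamma density satisfies the first-order (Pearson) equation
`(w² f)' = (κ - (μ - 1) w) f`, and with `κ = (μ - 1) m`, `(σ²/2)(μ - 1) = λ` this says that the
probability flux `λ (w - m) f + (σ²/2) (w² f)'` vanishes identically on `(0, ∞)`.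
Differentiating the flux once more gives the stationary Fokker–Planck equation.
-/

theorem hasDerivAt_exp_neg_div_mul_rpow (κ a : ℝ) {v : ℝ} (hv : 0 < v) :
    HasDerivAt (fun v => exp (-κ / v) * v ^ a) ((κ + a * v) * (exp (-κ / v) * v ^ (a - 2))) v := by
  have hinv : HasDerivAt (fun v => -κ / v) (κ / v ^ 2) v := by
    simpa [div_eq_mul_inv, neg_mul_neg] using (hasDerivAt_inv hv.ne').const_mul (-κ)
  refine (hinv.exp.mul (hasDerivAt_rpow_const (p := a) (Or.inl hv.ne'))).congr_deriv ?_
  rw [rpow_sub hv, rpow_sub hv, rpow_two, rpow_one]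
  field_simp

section InverseGammaDensity

variable {C κ μ : ℝ} {f : ℝ → ℝ}

theorem sq_mul_inverseGammaDensity_eventuallyEq
    (hf : ∀ v, 0 < v → f v = C * exp (-κ / v) / v ^ (1 + μ)) {w : ℝ} (hw : 0 < w) :
    (fun v => v ^ 2 * f v) =ᶠ[𝓝 w] fun v => C * (exp (-κ / v) * v ^ (1 - μ)) := by
  filter_upwards [Ioi_mem_nhds hw] with v hv
  rw [hf v hv, show 1 - μ = 2 - (1 + μ) by ring, rpow_sub hv, rpow_two]
  ring

theorem hasDerivAt_sq_mul_inverseGammaDensity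
    (hf : ∀ v, 0 < v → f v = C * exp (-κ / v) / v ^ (1 + μ)) {w : ℝ} (hw : 0 < w) :
    HasDerivAt (fun v => v ^ 2 * f v) ((κ - (μ - 1) * w) * f w) w := by
  refine (((hasDerivAt_exp_neg_div_mul_rpow κ (1 - μ) hw).const_mul C).congr_of_eventuallyEq
    (sq_mul_inverseGammaDensity_eventuallyEq hf hw)).congr_deriv ?_
  rw [hf w hw, show 1 - μ - 2 = -(1 + μ) by ring, rpow_neg hw.le]
  ring

theorem deriv_deriv_sq_mul_inverseGammaDensity
    (hf : ∀ v, 0 < v → f v = C * exp (-κ / v) / v ^ (1 + μ)) {w : ℝ} (hw : 0 < w) :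
    deriv (deriv fun v => v ^ 2 * f v) w = deriv (fun v => (κ - (μ - 1) * v) * f v) w := by
  refine EventuallyEq.deriv_eq ?_
  filter_upwards [Ioi_mem_nhds hw] with v hv
  exact (hasDerivAt_sq_mul_inverseGammaDensity hf hv).deriv

end InverseGammaDensity

theorem inverseGamma_stationary_FokkerPlanck_general
    (lam σ m : ℝ) (hσ : 0 < σ)
    (μ κ : ℝ) (hμ : μ = 1 + 2 * lam / σ ^ 2) (hκ : κ = (μ - 1) * m)
    (f : ℝ → ℝ)
    (hf : ∀ w : ℝ, 0 < w →
      f w = κ ^ μ / Real.Gamma μ * Real.exp (-κ / w) / w ^ (1 + μ)) :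
    ∀ w : ℝ, 0 < w →
      lam * deriv (fun v => (v - m) * f v) w
        + σ ^ 2 / 2 * deriv (deriv (fun v => v ^ 2 * f v)) w = 0 := by
  intro w hw
  have hdrift : (fun v => (κ - (μ - 1) * v) * f v) = fun v => -(μ - 1) * ((v - m) * f v) := by
    funext v
    rw [hκ]
    ring
  have hlam : σ ^ 2 / 2 * (μ - 1) = lam := by
    rw [hμ]
    field_simp
    ring
  rw [deriv_deriv_sq_mul_inverseGammaDensity hf hw, hdrift, deriv_const_mul_field']
  linear_combination -(deriv (fun v => (v - m) * f v) w) * hlam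

/-- the inverse Gamma density with μ = 1 + 2λ/σ², κ = (μ-1)m
solves the stationary Fokker–Planck equation
λ d/dw[(w-m)f(w)] + (σ²/2) d²/dw²[w²f(w)] = 0 on (0,∞). -/
theorem inverseGamma_stationary_FokkerPlanck
    (lam σ m : ℝ) (hlam : 0 < lam) (hσ : 0 < σ) (hm : 0 < m)
    (μ κ : ℝ) (hμ : μ = 1 + 2 * lam / σ ^ 2) (hκ : κ = (μ - 1) * m)
    (f : ℝ → ℝ)
    (hf : ∀ w : ℝ, 0 < w →
      f w = κ ^ μ / Real.Gamma μ * Real.exp (-κ / w) / w ^ (1 + μ)) :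
    ∀ w : ℝ, 0 < w →
      lam * deriv (fun v => (v - m) * f v) w
        + σ ^ 2 / 2 * deriv (deriv (fun v => v ^ 2 * f v)) w = 0 :=
  inverseGamma_stationary_FokkerPlanck_general lam σ m hσ μ κ hμ hκ f hf
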